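/- Let (Ω, F, μ) be a probability space, T ⊆ Ω a measurable event with p̃ := μ(T) ∈ (0, 1), P : Ω → ℝ and h : Ω → ℝ^H random variables with (h_j²)_j independent of (P, 1_T), and all relevant products integrable. Suppose additionally that the conditional expectations satisfy E[(1 − P)² | T] = A₁ and E[P² | Tᶜ] = A₂ · p̃ for real constants A₁, A₂. Then for each component j of the squared gradient G_j = (1_T − P)² · h_j², E[G_j] = E[h_j²] · p̃ · (A₁ + (1 − p̃) · A₂); in particular E[G_j] is proportional to the unigram probability p̃ with proportionality factor E[h_j²] · (A₁ + (1 − p̃) · A₂). -/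

import Mathlib

/-! Independence factors `E[G_j] = E[h_j²] · E[(1_T − P)²]`, and the law of total expectation
over `{T, Tᶜ}` turns the second factor into `p̃ · A₁ + (1 − p̃) · A₂ · p̃`. -/

open MeasureTheory ProbabilityTheory

namespace ProbabilityTheory

variable {Ω : Type*} [MeasurableSpace Ω] {μ : Measure Ω} {s : Set Ω}

lemma smul_cond_eq_restrict (hs : μ s ≠ ⊤) : μ s • μ[|s] = μ.restrict s := by
  rcases eq_or_ne (μ s) 0 with hs₀ | hs₀
  · simp [hs₀, Measure.restrict_eq_zero.mpr hs₀]
  · rw [cond, smul_smul, ENNReal.mul_inv_cancel hs₀ hs, one_smul]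

lemma smul_cond_add_smul_cond_compl [IsFiniteMeasure μ] (hs : MeasurableSet s) :
    μ s • μ[|s] + μ sᶜ • μ[|sᶜ] = μ := by
  rw [smul_cond_eq_restrict (measure_ne_top μ s), smul_cond_eq_restrict (measure_ne_top μ sᶜ),
    Measure.restrict_add_restrict_compl hs]

variable [IsFiniteMeasure μ] {f : Ω → ℝ}

lemma integrable_of_integrable_cond_of_integrable_cond_compl (hs : MeasurableSet s)
    (hf : Integrable f μ[|s]) (hfc : Integrable f μ[|sᶜ]) : Integrable f μ := by
  rw [← smul_cond_add_smul_cond_compl (μ := μ) hs]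
  exact integrable_add_measure.mpr
    ⟨hf.smul_measure (measure_ne_top μ s), hfc.smul_measure (measure_ne_top μ sᶜ)⟩

lemma integral_eq_integral_cond_add_integral_cond_compl (hs : MeasurableSet s)
    (hf : Integrable f μ[|s]) (hfc : Integrable f μ[|sᶜ]) :
    ∫ ω, f ω ∂μ = μ.real s * ∫ ω, f ω ∂μ[|s] + μ.real sᶜ * ∫ ω, f ω ∂μ[|sᶜ] := by
  conv_lhs => rw [← smul_cond_add_smul_cond_compl (μ := μ) hs]
  rw [integral_add_measure (hf.smul_measure (measure_ne_top μ s))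
      (hfc.smul_measure (measure_ne_top μ sᶜ)),
    integral_smul_measure, integral_smul_measure, smul_eq_mul, smul_eq_mul, measureReal_def,
    measureReal_def]

end ProbabilityTheory

theorem expectation_squared_gradient_propto_unigram_general
    {Ω : Type*} [MeasurableSpace Ω] (μ : Measure Ω) [IsProbabilityMeasure μ]
    (T : Set Ω) (hT : MeasurableSet T)
    {H : Type*}
    (P : Ω → ℝ) (h : Ω → H → ℝ)
    (G : H → Ω → ℝ)
    (hG : ∀ j ω, G j ω = (T.indicator (fun _ => (1 : ℝ)) ω - P ω) ^ 2 * (h ω j) ^ 2)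
    (hIndep : IndepFun (fun ω => fun j => (h ω j) ^ 2)
      (fun ω => (P ω, T.indicator (fun _ => (1 : ℝ)) ω)) μ)
    (hh_int : ∀ j, Integrable (fun ω => (h ω j) ^ 2) μ)
    (hP1_int : Integrable (fun ω => (1 - P ω) ^ 2) (μ[|T]))
    (hP2_int : Integrable (fun ω => (P ω) ^ 2) (μ[|Tᶜ]))
    (A₁ A₂ : ℝ)
    (hA₁ : ∫ ω, (1 - P ω) ^ 2 ∂(μ[|T]) = A₁)
    (hA₂ : ∫ ω, (P ω) ^ 2 ∂(μ[|Tᶜ]) = A₂ * (μ T).toReal) :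
    ∀ j, ∫ ω, G j ω ∂μ =
      (∫ ω, (h ω j) ^ 2 ∂μ) * (μ T).toReal * (A₁ + (1 - (μ T).toReal) * A₂) := by
  intro j
  set f : Ω → ℝ := fun ω => (T.indicator (fun _ => (1 : ℝ)) ω - P ω) ^ 2
  have hf_cond : f =ᵐ[μ[|T]] fun ω => (1 - P ω) ^ 2 := by
    filter_upwards [ae_cond_mem hT] with ω hω
    simp [f, hω]
  have hf_cond_compl : f =ᵐ[μ[|Tᶜ]] fun ω => P ω ^ 2 := by
    filter_upwards [ae_cond_mem hT.compl] with ω hω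
    simp [f, Set.notMem_of_mem_compl hω]
  have hf_int_cond := hP1_int.congr hf_cond.symm
  have hf_int_cond_compl := hP2_int.congr hf_cond_compl.symm
  have hf_eq : ∫ ω, f ω ∂μ = μ.real T * A₁ + (1 - μ.real T) * (A₂ * μ.real T) := by
    rw [integral_eq_integral_cond_add_integral_cond_compl hT hf_int_cond hf_int_cond_compl,
      integral_congr_ae hf_cond, integral_congr_ae hf_cond_compl, hA₁, hA₂, probReal_compl_eq_one_sub hT, measureReal_def]
  have hIndep_j : IndepFun (fun ω => h ω j ^ 2) f μ :=
    hIndep.comp (measurable_pi_apply j) ((measurable_snd.sub measurable_fst).pow_const 2)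
  calc ∫ ω, G j ω ∂μ = ∫ ω, h ω j ^ 2 * f ω ∂μ := by
        simp only [hG, f, mul_comm]
    _ = (∫ ω, h ω j ^ 2 ∂μ) * ∫ ω, f ω ∂μ :=
        hIndep_j.integral_fun_mul_eq_mul_integral (hh_int j).aestronglyMeasurable
          (integrable_of_integrable_cond_of_integrable_cond_compl hT hf_int_cond
            hf_int_cond_compl).aestronglyMeasurable
    _ = _ := by rw [hf_eq, measureReal_def]; ring

/-- **Expected squared gradient is proportional to the unigram probability.**
Under the assumptions of Theorem 1, if moreover `E[(1 − P)² | T] = A₁` and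
`E[P² | Tᶜ] = A₂ · p̃` for real constants `A₁, A₂` (with `p̃ = μ T`), then for each
component `j` of the squared gradient `G_j = (1_T − P)² · h_j²`,
`E[G_j] = E[h_j²] · p̃ · (A₁ + (1 − p̃) · A₂)`;
in particular `E[G_j]` is proportional to `p̃`. -/
theorem expectation_squared_gradient_propto_unigram
    {Ω : Type*} [MeasurableSpace Ω] (μ : Measure Ω) [IsProbabilityMeasure μ]
    (T : Set Ω) (hT : MeasurableSet T) (hT0 : 0 < μ T) (hT1 : μ T < 1)
    {H : Type*} [Fintype H]
    (P : Ω → ℝ) (h : Ω → H → ℝ)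
    (G : H → Ω → ℝ)
    (hG : ∀ j ω, G j ω = (T.indicator (fun _ => (1 : ℝ)) ω - P ω) ^ 2 * (h ω j) ^ 2)
    (hIndep : IndepFun (fun ω => fun j => (h ω j) ^ 2)
      (fun ω => (P ω, T.indicator (fun _ => (1 : ℝ)) ω)) μ)
    (hG_int : ∀ j, Integrable (G j) μ)
    (hh_int : ∀ j, Integrable (fun ω => (h ω j) ^ 2) μ)
    (hP1_int : Integrable (fun ω => (1 - P ω) ^ 2) (μ[|T]))
    (hP2_int : Integrable (fun ω => (P ω) ^ 2) (μ[|Tᶜ]))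
    (A₁ A₂ : ℝ)
    (hA₁ : ∫ ω, (1 - P ω) ^ 2 ∂(μ[|T]) = A₁)
    (hA₂ : ∫ ω, (P ω) ^ 2 ∂(μ[|Tᶜ]) = A₂ * (μ T).toReal) :
    ∀ j, ∫ ω, G j ω ∂μ =
      (∫ ω, (h ω j) ^ 2 ∂μ) * (μ T).toReal * (A₁ + (1 - (μ T).toReal) * A₂) :=
  expectation_squared_gradient_propto_unigram_general μ T hT P h G hG hIndep hh_int hP1_int hP2_int
    A₁ A₂ hA₁ hA₂
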